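/- arXiv:2206.09945 — 2 statements merged into one kernel-verified Lean document; each statement's English description precedes it below -/
import Mathlib

section
/- Assume (A12, A22) is observable, (A, B) is controllable, and K ∈ ℝ^{(n−p)×p} is such that A22 + K·A12 is Hurwitz (so the SRTR pair (W, V) is stable). Let Gp ∈ F^{m×p} (the plant) and set Kc := (λI_p − W)^{-1}·V ∈ F^{p×m}. Assume the (p+m)×(p+m) block matrix L := [[I_p, −Kc],[−Gp, I_m]] is invertible over F and every entry of L^{-1} is stable (i.e. Kc is a stabilizing controller for Gp). Then I_p − λ^{-1}·W − λ^{-1}·V·Gp is invertible over F and every entry of the (2p+m)×(2p+m) matrix H := [I_p; I_p; Gp]·(I_p − λ^{-1}·W − λ^{-1}·V·Gp)^{-1}·[I_p, λ^{-1}·W, λ^{-1}·V] is stable; that is, the SRTR-based implementation K_d(λ) = [λ^{-1}·W, λ^{-1}·V] internally stabilizes the closed loop. -/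
open Matrix Polynomial

set_option synthInstance.maxHeartbeats 1000000
set_option maxHeartbeats 1000000

noncomputable section

/-- The field of real rational functions. -/
abbrev FF : Type := RatFunc ℝ

/-- The rational function `λ` (the image of the polynomial indeterminate `X`). -/
noncomputable def lam : FF := RatFunc.X

/-- Entrywise embedding of a real matrix into matrices over `FF`. -/
noncomputable def mapF {k l : Type} (M : Matrix k l ℝ) : Matrix k l FF :=
  M.map (algebraMap ℝ FF)

/-- The pencil `λ I - M` over `FF`, for a real square matrix `M`. -/
noncomputable def lamI {k : Type} [Fintype k] [DecidableEq k] (M : Matrix k k ℝ) :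
    Matrix k k FF := lam • (1 : Matrix k k FF) - mapF M

/-- Entrywise complexification of a real matrix. -/
def mapC {k l : Type} (M : Matrix k l ℝ) : Matrix k l ℂ :=
  M.map (algebraMap ℝ ℂ)

/-- A real rational function is stable if every complex root of its reduced denominator
has real part `< 0`. -/
def StableF (f : RatFunc ℝ) : Prop :=
  ∀ z : ℂ, ((f.denom).map (algebraMap ℝ ℂ)).IsRoot z → z.re < 0

/-- A real square matrix is Hurwitz if all roots of its characteristic polynomial
have real part `< 0`. -/
def IsHurwitz {k : Type} [Fintype k] [DecidableEq k] (M : Matrix k k ℝ) : Prop :=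
  ∀ z : ℂ, ((M.charpoly).map (algebraMap ℝ ℂ)).IsRoot z → z.re < 0

/-- `A_K := K A11 - K A12 K + A21 - A22 K`. -/
noncomputable def AKmat {p r : ℕ} (A11 : Matrix (Fin p) (Fin p) ℝ)
    (A12 : Matrix (Fin p) (Fin r) ℝ) (A21 : Matrix (Fin r) (Fin p) ℝ)
    (A22 : Matrix (Fin r) (Fin r) ℝ) (K : Matrix (Fin r) (Fin p) ℝ) :
    Matrix (Fin r) (Fin p) ℝ :=
  K * A11 - K * A12 * K + A21 - A22 * K

/-- The `W` member of the SRTR pair obtained from `K`. -/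
noncomputable def srtrW {p r : ℕ} (A11 : Matrix (Fin p) (Fin p) ℝ)
    (A12 : Matrix (Fin p) (Fin r) ℝ) (A21 : Matrix (Fin r) (Fin p) ℝ)
    (A22 : Matrix (Fin r) (Fin r) ℝ) (K : Matrix (Fin r) (Fin p) ℝ) :
    Matrix (Fin p) (Fin p) FF :=
  mapF (A11 - A12 * K) +
    mapF A12 * (lamI (A22 + K * A12))⁻¹ * mapF (AKmat A11 A12 A21 A22 K)

/-- The `V` member of the SRTR pair obtained from `K`. -/
noncomputable def srtrV {p r m : ℕ} (A12 : Matrix (Fin p) (Fin r) ℝ)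
    (A22 : Matrix (Fin r) (Fin r) ℝ) (B1 : Matrix (Fin p) (Fin m) ℝ)
    (B2 : Matrix (Fin r) (Fin m) ℝ) (K : Matrix (Fin r) (Fin p) ℝ) :
    Matrix (Fin p) (Fin m) FF :=
  mapF B1 + mapF A12 * (lamI (A22 + K * A12))⁻¹ * mapF (K * B1 + B2)

/-- The plant transfer function `G = [I_p 0] (λ I_n - A)⁻¹ B`. -/
noncomputable def plantG {p r m : ℕ} (A11 : Matrix (Fin p) (Fin p) ℝ)
    (A12 : Matrix (Fin p) (Fin r) ℝ) (A21 : Matrix (Fin r) (Fin p) ℝ)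
    (A22 : Matrix (Fin r) (Fin r) ℝ) (B1 : Matrix (Fin p) (Fin m) ℝ)
    (B2 : Matrix (Fin r) (Fin m) ℝ) : Matrix (Fin p) (Fin m) FF :=
  fromCols (1 : Matrix (Fin p) (Fin p) FF) (0 : Matrix (Fin p) (Fin r) FF) *
    (lamI (fromBlocks A11 A12 A21 A22))⁻¹ * mapF (fromRows B1 B2)

/-- `(A12, A22)` is observable: `[A22 - μ I ; A12]` has full column rank for all `μ : ℂ`. -/
def ObsPair {p r : ℕ} (A12 : Matrix (Fin p) (Fin r) ℝ)
    (A22 : Matrix (Fin r) (Fin r) ℝ) : Prop :=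
  ∀ μ : ℂ, (fromRows (mapC A22 - μ • (1 : Matrix (Fin r) (Fin r) ℂ)) (mapC A12)).rank = r

/-- `(A, B)` is controllable: `[A - μ I, B]` has full row rank for all `μ : ℂ`. -/
def CtrbPair {p r m : ℕ} (A : Matrix (Fin p ⊕ Fin r) (Fin p ⊕ Fin r) ℝ)
    (B : Matrix (Fin p ⊕ Fin r) (Fin m) ℝ) : Prop :=
  ∀ μ : ℂ, (fromCols (mapC A - μ • (1 : Matrix (Fin p ⊕ Fin r) (Fin p ⊕ Fin r) ℂ))
    (mapC B)).rank = p + r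

/-!
Put `S := λI - W`. As `S` is invertible, `Kc = S⁻¹ V` and `T = λ⁻¹ S (I - Kc Gp)`; writing
`L⁻¹ = [[X, X Kc], [Gp X, I + Gp X Kc]]` gives `T⁻¹ = λ X S⁻¹`, and the rows of `H` are
`R T⁻¹ [I, λ⁻¹ W, λ⁻¹ V] = [R T⁻¹, R T⁻¹ - R X, R X Kc]` for `R = I` and `R = Gp`. So it suffices
that `Y := R T⁻¹` is stable, knowing that `Y S = λ R X` and `Y V = λ R X Kc` are.

With `G := (λI - A22 - K A12)⁻¹`, the row `E := [I + A12 G K, A12 G]` satisfies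
`E (λI - A) = [S, 0]`, `E B = V` and `E [I; -K] = I`, so `Z := Y E` makes `Z [A - λI, B]` stable
and `Y = Z [I; -K]`. By controllability, at each `μ` with `Re μ ≥ 0` some maximal minor of
`[A - μI, B]` is nonzero: the corresponding square block of the polynomial pencil can be inverted
over the rational functions regular at `μ`, so `Z` has no pole at `μ`.
-/

theorem Matrix.exists_submatrix_det_ne_zero_of_rank_eq_card {K m n : Type*} [Field K]
    [Fintype m] [DecidableEq m] [Fintype n] (N : Matrix m n K) (hN : N.rank = Fintype.card m) :
    ∃ σ : m → n, (N.submatrix id σ).det ≠ 0 := by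
  obtain ⟨κ, a, ha, hspan, hli⟩ := exists_linearIndependent' K N.col
  have : Fintype κ := Fintype.ofInjective a ha
  have hcard : Fintype.card κ = Fintype.card m := by
    rw [← finrank_span_eq_card hli, hspan, ← rank_eq_finrank_span_cols, hN]
  let e : m ≃ κ := Fintype.equivOfCardEq hcard.symm
  refine ⟨a ∘ e, ?_⟩
  rw [← isUnit_iff_ne_zero, ← isUnit_iff_isUnit_det, ← linearIndependent_cols_iff_isUnit]
  exact hli.comp e e.injective

theorem Matrix.exists_inv_fromBlocks_one_neg_one {R : Type*} [CommRing R] {l n : Type*}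
    [Fintype l] [DecidableEq l] [Fintype n] [DecidableEq n] (C : Matrix l n R) (G : Matrix n l R)
    (hL : IsUnit (fromBlocks 1 (-C) (-G) 1)) :
    ∃ X : Matrix l l R, (1 - C * G) * X = 1 ∧
      (fromBlocks 1 (-C) (-G) 1)⁻¹ = fromBlocks X (X * C) (G * X) (1 + G * X * C) := by
  set L := fromBlocks 1 (-C) (-G) 1
  set M := L⁻¹
  have hdet := (isUnit_iff_isUnit_det L).mp hL
  have hLM : L * fromBlocks M.toBlocks₁₁ M.toBlocks₁₂ M.toBlocks₂₁ M.toBlocks₂₂ = 1 := by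
    rw [fromBlocks_toBlocks]; exact mul_nonsing_inv L hdet
  have hML : fromBlocks M.toBlocks₁₁ M.toBlocks₁₂ M.toBlocks₂₁ M.toBlocks₂₂ * L = 1 := by
    rw [fromBlocks_toBlocks]; exact nonsing_inv_mul L hdet
  rw [fromBlocks_multiply, ← fromBlocks_one, fromBlocks_inj] at hLM hML
  obtain ⟨h11, -, h21, h22⟩ := hLM
  obtain ⟨-, h12', -, -⟩ := hML
  simp only [Matrix.one_mul, Matrix.mul_one, Matrix.neg_mul, Matrix.mul_neg] at h11 h21 h22 h12'
  have h21' : M.toBlocks₂₁ = G * M.toBlocks₁₁ := by rw [← sub_eq_zero, ← h21]; abel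
  have h12 : M.toBlocks₁₂ = M.toBlocks₁₁ * C := by rw [← sub_eq_zero, ← h12']; abel
  refine ⟨M.toBlocks₁₁, ?_, ?_⟩
  · rw [Matrix.sub_mul, Matrix.one_mul, Matrix.mul_assoc, ← h21', ← h11]; abel
  · conv_lhs => rw [← fromBlocks_toBlocks M]
    rw [h21', h12, ← h22, h12, Matrix.mul_assoc]
    congr 1
    abel

theorem one_sub_inv_smul_mul_eq_one {𝕜 : Type*} [Field 𝕜] {l n : Type*} [Fintype l]
    [DecidableEq l] [Fintype n] {c : 𝕜} (hc : c ≠ 0) (W : Matrix l l 𝕜) (V : Matrix l n 𝕜)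
    (G : Matrix n l 𝕜) (hS : IsUnit (c • 1 - W).det) {X : Matrix l l 𝕜}
    (hX : (1 - (c • 1 - W)⁻¹ * V * G) * X = 1) :
    (1 - c⁻¹ • W - c⁻¹ • (V * G)) * (c • (X * (c • 1 - W)⁻¹)) = 1 := by
  have hT : 1 - c⁻¹ • W - c⁻¹ • (V * G) = c⁻¹ • ((c • 1 - W) * (1 - (c • 1 - W)⁻¹ * V * G)) := by
    rw [Matrix.mul_sub, Matrix.mul_one, ← Matrix.mul_assoc, ← Matrix.mul_assoc,
      mul_nonsing_inv _ hS, Matrix.one_mul, smul_sub, smul_sub, smul_smul, inv_mul_cancel₀ hc,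
      one_smul]
  rw [hT, smul_mul_smul_comm, inv_mul_cancel₀ hc, one_smul, Matrix.mul_assoc,
    ← Matrix.mul_assoc _ X, hX, Matrix.one_mul, mul_nonsing_inv _ hS]

namespace Subring

variable {R : Type*} [Ring R] (S : Subring R) {l n o : Type*}

theorem mul_mem_matrix [Fintype n] {M : Matrix l n R} {N : Matrix n o R}
    (hM : M ∈ (S : Set R).matrix) (hN : N ∈ (S : Set R).matrix) :
    M * N ∈ (S : Set R).matrix :=
  fun i j => S.sum_mem fun k _ => S.mul_mem (hM i k) (hN k j)

theorem smul_mem_matrix {c : R} {M : Matrix l n R} (hc : c ∈ S) (hM : M ∈ (S : Set R).matrix) :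
    c • M ∈ (S : Set R).matrix :=
  fun i j => S.mul_mem hc (hM i j)

theorem map_mem_matrix {R' : Type*} [Ring R'] (φ : R' →+* R) (hφ : ∀ x, φ x ∈ S)
    (M : Matrix l n R') : M.map φ ∈ (S : Set R).matrix :=
  fun i j => hφ (M i j)

end Subring

namespace Matrix

variable {α : Type*} {S : Set α} {l m n : Type*}

theorem fromRows_mem_matrix {M : Matrix l n α} {N : Matrix m n α} (hM : M ∈ S.matrix)
    (hN : N ∈ S.matrix) : fromRows M N ∈ S.matrix
  | .inl i, j => hM i j
  | .inr i, j => hN i j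

theorem fromCols_mem_matrix {M : Matrix l m α} {N : Matrix l n α} (hM : M ∈ S.matrix)
    (hN : N ∈ S.matrix) : fromCols M N ∈ S.matrix
  | i, .inl j => hM i j
  | i, .inr j => hN i j

end Matrix

namespace RatFunc

variable {K L : Type*} [Field K] [Field L] (f : K →+* L) (a : L)

theorem eval₂_denom_ne_zero_of_dvd {g : RatFunc K} {q : K[X]} (hq : q.eval₂ f a ≠ 0)
    (h : g.denom ∣ q) : g.denom.eval₂ f a ≠ 0 := by
  obtain ⟨c, rfl⟩ := h
  exact left_ne_zero_of_mul (by rwa [eval₂_mul] at hq)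

def regularAt : Subring (RatFunc K) where
  carrier := {g | g.denom.eval₂ f a ≠ 0}
  mul_mem' {x y} hx hy :=
    eval₂_denom_ne_zero_of_dvd f a (by simp_all [eval₂_mul]) (denom_mul_dvd x y)
  add_mem' {x y} hx hy :=
    eval₂_denom_ne_zero_of_dvd f a (by simp_all [eval₂_mul]) (denom_add_dvd x y)
  one_mem' := by simp [denom_one]
  zero_mem' := by simp [denom_zero]
  neg_mem' {x} hx := by
    have hneg : -x = algebraMap K[X] _ (-x.num) / algebraMap K[X] _ x.denom := by
      rw [map_neg, neg_div, num_div_denom]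
    exact eval₂_denom_ne_zero_of_dvd f a hx (hneg ▸ denom_div_dvd _ _)

variable {f a}

theorem mem_regularAt {g : RatFunc K} : g ∈ regularAt f a ↔ g.denom.eval₂ f a ≠ 0 := .rfl

variable (f a) in
theorem algebraMap_mem_regularAt (q : K[X]) : algebraMap K[X] (RatFunc K) q ∈ regularAt f a := by
  simp [mem_regularAt, denom_algebraMap]

theorem inv_algebraMap_mem_regularAt {q : K[X]} (hq : q.eval₂ f a ≠ 0) :
    (algebraMap K[X] (RatFunc K) q)⁻¹ ∈ regularAt f a := by
  rw [inv_eq_one_div, ← map_one (algebraMap K[X] (RatFunc K))]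
  exact eval₂_denom_ne_zero_of_dvd f a hq (denom_div_dvd _ _)

theorem mem_regularAt_matrix_of_mul_polynomial {m n s : Type*} [Fintype m] [DecidableEq m]
    [Fintype n] (N : Matrix m n K[X]) (hN : (N.map (eval₂RingHom f a)).rank = Fintype.card m)
    {Z : Matrix s m (RatFunc K)}
    (hZ : Z * N.map (algebraMap K[X] (RatFunc K)) ∈ (regularAt f a : Set (RatFunc K)).matrix) :
    Z ∈ (regularAt f a : Set (RatFunc K)).matrix := by
  obtain ⟨σ, hσ⟩ := (N.map (eval₂RingHom f a)).exists_submatrix_det_ne_zero_of_rank_eq_card hN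
  set φ := algebraMap K[X] (RatFunc K)
  set S := N.submatrix id σ
  have hdet : S.det.eval₂ f a ≠ 0 := by
    rwa [← coe_eval₂RingHom, RingHom.map_det]
  have hSφ : S.map φ * S.adjugate.map φ = φ S.det • 1 := by
    rw [← Matrix.map_mul, mul_adjugate, Matrix.map_smul' _ _ _ (map_mul φ),
      Matrix.map_one _ (map_zero φ) (map_one φ)]
  have hφdet : φ S.det ≠ 0 := fun h => hdet (by
    rw [(map_eq_zero_iff φ (IsFractionRing.injective K[X] (RatFunc K))).mp h, eval₂_zero])
  have hZ' : Z = (φ S.det)⁻¹ • ((Z * N.map φ).submatrix id σ * S.adjugate.map φ) := by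
    rw [submatrix_mul _ _ _ id _ Function.bijective_id, submatrix_id_id, submatrix_map,
      Matrix.mul_assoc, hSφ, Matrix.mul_smul, Matrix.mul_one, smul_smul, inv_mul_cancel₀ hφdet,
      one_smul]
  rw [hZ']
  exact (regularAt f a).smul_mem_matrix (inv_algebraMap_mem_regularAt hdet)
    ((regularAt f a).mul_mem_matrix (submatrix_mem_matrix hZ)
      ((regularAt f a).map_mem_matrix φ (algebraMap_mem_regularAt f a) _))

end RatFunc

def stableSubring : Subring FF :=
  ⨅ μ : {μ : ℂ // 0 ≤ μ.re}, RatFunc.regularAt (algebraMap ℝ ℂ) (μ : ℂ)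

theorem mem_stableSubring_iff_forall_regularAt {g : FF} :
    g ∈ stableSubring ↔ ∀ μ : ℂ, 0 ≤ μ.re → g ∈ RatFunc.regularAt (algebraMap ℝ ℂ) μ := by
  simp [stableSubring, Subring.mem_iInf]

theorem mem_stableSubring {g : FF} : g ∈ stableSubring ↔ StableF g := by
  simp only [mem_stableSubring_iff_forall_regularAt, RatFunc.mem_regularAt, StableF, IsRoot.def,
    eval_map]
  exact forall_congr' fun μ => by rw [← not_lt, not_imp_not]

theorem algebraMap_mem_stableSubring (q : ℝ[X]) : algebraMap ℝ[X] FF q ∈ stableSubring :=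
  mem_stableSubring_iff_forall_regularAt.mpr fun μ _ => RatFunc.algebraMap_mem_regularAt _ μ q

theorem lam_mem_stableSubring : lam ∈ stableSubring := by
  rw [lam, ← RatFunc.algebraMap_X]
  exact algebraMap_mem_stableSubring X

theorem mapF_mem_stableSubring_matrix {k l : Type} (M : Matrix k l ℝ) :
    mapF M ∈ (stableSubring : Set FF).matrix := fun i j => by
  rw [mapF, map_apply, IsScalarTower.algebraMap_apply ℝ ℝ[X] FF]
  exact algebraMap_mem_stableSubring _

theorem mapF_mul {k l o : Type} [Fintype l] (M : Matrix k l ℝ) (N : Matrix l o ℝ) :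
    mapF (M * N) = mapF M * mapF N :=
  Matrix.map_mul

theorem mapF_add {k l : Type} (M N : Matrix k l ℝ) : mapF (M + N) = mapF M + mapF N :=
  Matrix.map_add _ (map_add _) M N

theorem mapF_sub {k l : Type} (M N : Matrix k l ℝ) : mapF (M - N) = mapF M - mapF N :=
  Matrix.map_sub _ (map_sub _) M N

theorem mapF_neg {k l : Type} (M : Matrix k l ℝ) : mapF (-M) = -mapF M :=
  Matrix.map_neg _ (map_neg _) M

theorem mapF_one {k : Type} [DecidableEq k] : mapF (1 : Matrix k k ℝ) = 1 :=
  Matrix.map_one _ (map_zero _) (map_one _)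

theorem mapF_fromRows {k l o : Type} (M : Matrix k o ℝ) (N : Matrix l o ℝ) :
    mapF (fromRows M N) = fromRows (mapF M) (mapF N) :=
  fromRows_map M N _

theorem lamI_eq_map_charmatrix {k : Type} [Fintype k] [DecidableEq k] (M : Matrix k k ℝ) :
    lamI M = (charmatrix M).map (algebraMap ℝ[X] FF) := by
  ext i j
  by_cases h : i = j
  · subst h
    simp [lamI, mapF, lam, charmatrix_apply_eq, RatFunc.algebraMap_X, RatFunc.algebraMap_C]
  · simp [lamI, mapF, h, RatFunc.algebraMap_C]

theorem det_lamI {k : Type} [Fintype k] [DecidableEq k] (M : Matrix k k ℝ) :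
    (lamI M).det = algebraMap ℝ[X] FF M.charpoly := by
  rw [lamI_eq_map_charmatrix, charpoly, RingHom.map_det]; rfl

theorem det_lamI_ne_zero {k : Type} [Fintype k] [DecidableEq k] (M : Matrix k k ℝ) :
    (lamI M).det ≠ 0 := by
  rw [det_lamI, map_ne_zero_iff _ (IsFractionRing.injective ℝ[X] FF)]
  exact M.charpoly_monic.ne_zero

theorem lamI_fromBlocks {k l : Type} [Fintype k] [DecidableEq k] [Fintype l] [DecidableEq l]
    (A11 : Matrix k k ℝ) (A12 : Matrix k l ℝ) (A21 : Matrix l k ℝ) (A22 : Matrix l l ℝ) :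
    lamI (fromBlocks A11 A12 A21 A22) =
      fromBlocks (lamI A11) (-mapF A12) (-mapF A21) (lamI A22) := by
  ext (i | i) (j | j) <;> simp [lamI, mapF, one_apply]

theorem mem_stableSubring_matrix_of_mul_pencil {n k s : Type} [Fintype n] [DecidableEq n]
    [Fintype k] (A : Matrix n n ℝ) (B : Matrix n k ℝ)
    (hAB : ∀ μ : ℂ, 0 ≤ μ.re → (fromCols (mapC A - μ • 1) (mapC B)).rank = Fintype.card n)
    {Z : Matrix s n FF}
    (hZ : Z * fromCols (mapF A - lam • 1) (mapF B) ∈ (stableSubring : Set FF).matrix) :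
    Z ∈ (stableSubring : Set FF).matrix := by
  set N : Matrix n (n ⊕ k) ℝ[X] := fromCols (A.map C - (X : ℝ[X]) • 1) (B.map C)
  have hNF : N.map (algebraMap ℝ[X] FF) = fromCols (mapF A - lam • 1) (mapF B) := by
    ext i (j | j)
    · by_cases h : i = j <;>
        simp [N, mapF, lam, one_apply, h, RatFunc.algebraMap_C, RatFunc.algebraMap_X]
    · simp [N, mapF, RatFunc.algebraMap_C]
  have hNC (μ : ℂ) :
      N.map (eval₂RingHom (algebraMap ℝ ℂ) μ) = fromCols (mapC A - μ • 1) (mapC B) := by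
    ext i (j | j)
    · by_cases h : i = j <;> simp [N, mapC, one_apply, h]
    · simp [N, mapC]
  refine fun i j => mem_stableSubring_iff_forall_regularAt.mpr fun μ hμ => ?_
  refine RatFunc.mem_regularAt_matrix_of_mul_polynomial N (hNC μ ▸ hAB μ hμ) ?_ i j
  rw [hNF]
  exact fun i j => mem_stableSubring_iff_forall_regularAt.mp (hZ i j) μ hμ

section SRTR

variable {p r m : ℕ} (A11 : Matrix (Fin p) (Fin p) ℝ) (A12 : Matrix (Fin p) (Fin r) ℝ)
  (A21 : Matrix (Fin r) (Fin p) ℝ) (A22 : Matrix (Fin r) (Fin r) ℝ)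
  (B1 : Matrix (Fin p) (Fin m) ℝ) (B2 : Matrix (Fin r) (Fin m) ℝ) (K : Matrix (Fin r) (Fin p) ℝ)

def srtrFactor : Matrix (Fin p) (Fin p ⊕ Fin r) FF :=
  fromCols (1 + mapF A12 * (lamI (A22 + K * A12))⁻¹ * mapF K)
    (mapF A12 * (lamI (A22 + K * A12))⁻¹)

theorem srtrFactor_mul_lamI :
    srtrFactor A12 A22 K * lamI (fromBlocks A11 A12 A21 A22) =
      fromCols (lam • 1 - srtrW A11 A12 A21 A22 K) 0 := by
  set G := (lamI (A22 + K * A12))⁻¹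
  have hG : G * lamI (A22 + K * A12) = 1 :=
    nonsing_inv_mul _ (isUnit_iff_ne_zero.mpr (det_lamI_ne_zero _))
  have hFK : mapF K * lamI A11 - mapF A21 + mapF (AKmat A11 A12 A21 A22 K) =
      lamI (A22 + K * A12) * mapF K := by
    simp only [lamI, AKmat, mapF_add, mapF_sub, mapF_mul, Matrix.mul_sub, Matrix.sub_mul,
      Matrix.add_mul, Matrix.mul_smul, Matrix.smul_mul, Matrix.mul_one, Matrix.one_mul]
    abel
  rw [srtrFactor, lamI_fromBlocks, fromCols_mul_fromBlocks, srtrW]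
  congr 1
  · calc (1 + mapF A12 * G * mapF K) * lamI A11 + mapF A12 * G * -mapF A21
        = lamI A11 + mapF A12 * G * (mapF K * lamI A11 - mapF A21) := by
          simp only [Matrix.add_mul, Matrix.one_mul, Matrix.mul_sub, Matrix.mul_neg,
            Matrix.mul_assoc]
          abel
      _ = lamI A11 + mapF A12 * G * (lamI (A22 + K * A12) * mapF K)
            - mapF A12 * G * mapF (AKmat A11 A12 A21 A22 K) := by
          rw [← hFK]
          simp only [Matrix.mul_add, Matrix.mul_sub]
          abel
      _ = _ := by
          rw [← Matrix.mul_assoc, Matrix.mul_assoc (mapF A12), hG, Matrix.mul_one, lamI, mapF_sub,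
            mapF_mul]
          abel
  · calc (1 + mapF A12 * G * mapF K) * -mapF A12 + mapF A12 * G * lamI A22
        = mapF A12 * (G * lamI (A22 + K * A12)) - mapF A12 := by
          simp only [lamI, mapF_add, mapF_mul, Matrix.add_mul, Matrix.one_mul, Matrix.mul_sub,
            Matrix.mul_neg, Matrix.mul_assoc, Matrix.mul_add]
          abel
      _ = 0 := by rw [hG, Matrix.mul_one, sub_self]

theorem srtrFactor_mul_mapF :
    srtrFactor A12 A22 K * mapF (fromRows B1 B2) = srtrV A12 A22 B1 B2 K := by
  rw [srtrFactor, mapF_fromRows, fromCols_mul_fromRows, srtrV, mapF_add, mapF_mul]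
  simp only [Matrix.add_mul, Matrix.one_mul, Matrix.mul_add, Matrix.mul_assoc]
  abel

theorem srtrFactor_mul_fromRows :
    srtrFactor A12 A22 K * mapF (fromRows (1 : Matrix (Fin p) (Fin p) ℝ) (-K)) = 1 := by
  rw [srtrFactor, mapF_fromRows, fromCols_mul_fromRows, mapF_one, mapF_neg]
  simp [Matrix.mul_assoc]

theorem det_lam_smul_one_sub_srtrW_ne_zero : (lam • 1 - srtrW A11 A12 A21 A22 K).det ≠ 0 := by
  set E := fromRows (srtrFactor A12 A22 K) (fromCols (mapF K) (1 : Matrix (Fin r) (Fin r) FF))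
  have hE : E.det = 1 := by
    simp [E, srtrFactor, Matrix.mul_assoc]
  have hEA : E * lamI (fromBlocks A11 A12 A21 A22) =
      fromBlocks (lam • 1 - srtrW A11 A12 A21 A22 K) 0
        (mapF K * lamI A11 - mapF A21) (lamI (A22 + K * A12)) := by
    rw [fromRows_mul, srtrFactor_mul_lamI, lamI_fromBlocks, fromCols_mul_fromBlocks,
      ← fromRows_fromCols_eq_fromBlocks]
    simp only [lamI, mapF_add, mapF_mul, Matrix.mul_neg, Matrix.one_mul, sub_eq_add_neg]
    abel_nf
  have hdet := congrArg det hEA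
  rw [det_mul, hE, one_mul, det_fromBlocks_zero₁₂] at hdet
  exact left_ne_zero_of_mul (hdet ▸ det_lamI_ne_zero _)

theorem mem_stableSubring_matrix_of_mul_srtr {s : Type}
    (hctrb : CtrbPair (fromBlocks A11 A12 A21 A22) (fromRows B1 B2))
    {Y P : Matrix s (Fin p) FF} {Q : Matrix s (Fin m) FF}
    (hYW : Y * (lam • 1 - srtrW A11 A12 A21 A22 K) = lam • P)
    (hYV : Y * srtrV A12 A22 B1 B2 K = lam • Q)
    (hP : P ∈ (stableSubring : Set FF).matrix) (hQ : Q ∈ (stableSubring : Set FF).matrix) :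
    Y ∈ (stableSubring : Set FF).matrix := by
  set A := fromBlocks A11 A12 A21 A22
  set Z := Y * srtrFactor A12 A22 K
  have hZ : Z * fromCols (mapF A - lam • 1) (mapF (fromRows B1 B2)) =
      fromCols (fromCols ((-lam) • P) 0) (lam • Q) := by
    rw [show mapF A - lam • 1 = -lamI A from (neg_sub _ _).symm, mul_fromCols, Matrix.mul_neg,
      Matrix.mul_assoc, Matrix.mul_assoc, srtrFactor_mul_lamI, srtrFactor_mul_mapF, mul_fromCols,
      hYW, hYV, Matrix.mul_zero, fromCols_neg, neg_zero, neg_smul]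
  have hZstab : Z ∈ (stableSubring : Set FF).matrix := by
    refine mem_stableSubring_matrix_of_mul_pencil A _ (fun μ _ => by simpa using hctrb μ) ?_
    rw [hZ]
    exact fromCols_mem_matrix (fromCols_mem_matrix
      (stableSubring.smul_mem_matrix (neg_mem lam_mem_stableSubring) hP)
      fun _ _ => zero_mem _) (stableSubring.smul_mem_matrix lam_mem_stableSubring hQ)
  have hY : Y = Z * mapF (fromRows (1 : Matrix (Fin p) (Fin p) ℝ) (-K)) := by
    rw [Matrix.mul_assoc, srtrFactor_mul_fromRows, Matrix.mul_one]
  rw [hY]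
  exact stableSubring.mul_mem_matrix hZstab (mapF_mem_stableSubring_matrix _)

theorem mul_srtrImplementation_mem_stableSubring_matrix {s : Type}
    (hctrb : CtrbPair (fromBlocks A11 A12 A21 A22) (fromRows B1 B2))
    (R : Matrix s (Fin p) FF) {X : Matrix (Fin p) (Fin p) FF}
    (hRX : R * X ∈ (stableSubring : Set FF).matrix)
    (hRXC : R * X * ((lam • 1 - srtrW A11 A12 A21 A22 K)⁻¹ * srtrV A12 A22 B1 B2 K) ∈
      (stableSubring : Set FF).matrix) :
    R * (lam • (X * (lam • 1 - srtrW A11 A12 A21 A22 K)⁻¹)) *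
      fromCols (fromCols (1 : Matrix (Fin p) (Fin p) FF) (lam⁻¹ • srtrW A11 A12 A21 A22 K))
        (lam⁻¹ • srtrV A12 A22 B1 B2 K) ∈
      (stableSubring : Set FF).matrix := by
  set W := srtrW A11 A12 A21 A22 K
  set V := srtrV A12 A22 B1 B2 K
  set S := lam • 1 - W
  have hS : IsUnit S.det := isUnit_iff_ne_zero.mpr (det_lam_smul_one_sub_srtrW_ne_zero _ _ _ _ _)
  have hlam : lam ≠ 0 := RatFunc.X_ne_zero
  set RY := R * (lam • (X * S⁻¹))
  have hRYS : RY * S = lam • (R * X) := by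
    rw [Matrix.mul_assoc, Matrix.smul_mul, Matrix.mul_assoc, nonsing_inv_mul _ hS,
      Matrix.mul_one, Matrix.mul_smul]
  have hRYV : RY * V = lam • (R * X * (S⁻¹ * V)) := by
    simp only [RY, Matrix.mul_smul, Matrix.smul_mul, Matrix.mul_assoc]
  have hRY : RY ∈ (stableSubring : Set FF).matrix :=
    mem_stableSubring_matrix_of_mul_srtr A11 A12 A21 A22 B1 B2 K hctrb hRYS hRYV hRX hRXC
  have hW : RY * (lam⁻¹ • W) = RY - R * X := by
    rw [show W = lam • 1 - S from (sub_sub_cancel _ _).symm, smul_sub, smul_smul,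
      inv_mul_cancel₀ hlam, one_smul, Matrix.mul_sub, Matrix.mul_one, Matrix.mul_smul, hRYS,
      smul_smul, inv_mul_cancel₀ hlam, one_smul]
  have hV : RY * (lam⁻¹ • V) = R * X * (S⁻¹ * V) := by
    rw [Matrix.mul_smul, hRYV, smul_smul, inv_mul_cancel₀ hlam, one_smul]
  rw [mul_fromCols, mul_fromCols, Matrix.mul_one, hW, hV]
  exact fromCols_mem_matrix (fromCols_mem_matrix hRY (fun i j => sub_mem (hRY i j) (hRX i j)))
    hRXC

end SRTR

theorem stmt_13_general (p r m : ℕ)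
    (A11 : Matrix (Fin p) (Fin p) ℝ) (A12 : Matrix (Fin p) (Fin r) ℝ)
    (A21 : Matrix (Fin r) (Fin p) ℝ) (A22 : Matrix (Fin r) (Fin r) ℝ)
    (B1 : Matrix (Fin p) (Fin m) ℝ) (B2 : Matrix (Fin r) (Fin m) ℝ)
    (hctrb : CtrbPair (fromBlocks A11 A12 A21 A22) (fromRows B1 B2))
    (K : Matrix (Fin r) (Fin p) ℝ)
    (Gp : Matrix (Fin m) (Fin p) FF)
    (hL : IsUnit (fromBlocks (1 : Matrix (Fin p) (Fin p) FF)
      (-((lam • (1 : Matrix (Fin p) (Fin p) FF) - srtrW A11 A12 A21 A22 K)⁻¹ *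
        srtrV A12 A22 B1 B2 K)) (-Gp) (1 : Matrix (Fin m) (Fin m) FF)))
    (hLstab : ∀ i j, StableF ((fromBlocks (1 : Matrix (Fin p) (Fin p) FF)
      (-((lam • (1 : Matrix (Fin p) (Fin p) FF) - srtrW A11 A12 A21 A22 K)⁻¹ *
        srtrV A12 A22 B1 B2 K)) (-Gp) (1 : Matrix (Fin m) (Fin m) FF))⁻¹ i j)) :
    let W := srtrW A11 A12 A21 A22 K
    let V := srtrV A12 A22 B1 B2 K
    let T : Matrix (Fin p) (Fin p) FF :=
      (1 : Matrix (Fin p) (Fin p) FF) - lam⁻¹ • W - lam⁻¹ • (V * Gp)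
    IsUnit T ∧
    (∀ i j, StableF ((fromRows (fromRows (1 : Matrix (Fin p) (Fin p) FF)
        (1 : Matrix (Fin p) (Fin p) FF)) Gp * T⁻¹ *
      fromCols (fromCols (1 : Matrix (Fin p) (Fin p) FF) (lam⁻¹ • W))
        (lam⁻¹ • V)) i j)) := by
  intro W V T
  obtain ⟨X, hX, hLinv⟩ := exists_inv_fromBlocks_one_neg_one _ Gp hL
  have hS : IsUnit (lam • 1 - W).det :=
    isUnit_iff_ne_zero.mpr (det_lam_smul_one_sub_srtrW_ne_zero A11 A12 A21 A22 K)
  have hTY : T * (lam • (X * (lam • 1 - W)⁻¹)) = 1 :=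
    one_sub_inv_smul_mul_eq_one RatFunc.X_ne_zero W V Gp hS hX
  have hLinvStab := hLinv ▸ fun i j => mem_stableSubring.mpr (hLstab i j)
  have hGXC : Gp * X * ((lam • 1 - W)⁻¹ * V) ∈ (stableSubring : Set FF).matrix := fun i j => by
    have h := sub_mem (hLinvStab (.inr i) (.inr j))
      ((stableSubring.matrix (n := Fin m)).one_mem i j)
    rwa [fromBlocks_apply₂₂, ← Matrix.sub_apply, add_sub_cancel_left] at h
  refine ⟨(isUnit_iff_isUnit_det T).mpr (isUnit_det_of_right_inverse hTY), fun i j => ?_⟩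
  rw [← mem_stableSubring, inv_eq_right_inv hTY, fromRows_mul, fromRows_mul, fromRows_mul,
    fromRows_mul]
  have hrow1 := mul_srtrImplementation_mem_stableSubring_matrix A11 A12 A21 A22 B1 B2 K hctrb 1
    (X := X) (by rw [Matrix.one_mul]; exact fun i j => hLinvStab (.inl i) (.inl j))
    (by rw [Matrix.one_mul]; exact fun i j => hLinvStab (.inl i) (.inr j))
  have hrowG := mul_srtrImplementation_mem_stableSubring_matrix A11 A12 A21 A22 B1 B2 K hctrb Gp
    (X := X) (fun i j => hLinvStab (.inr i) (.inl j)) hGXC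
  exact fromRows_mem_matrix (fromRows_mem_matrix hrow1 hrow1) hrowG i j

/-- if the controller `Kc = (λ I_p - W)⁻¹ V` (with stable SRTR pair)
internally stabilizes the plant `Gp`, then the SRTR-based implementation
`K_d(λ) = [λ⁻¹ W, λ⁻¹ V]` internally stabilizes the closed loop: all entries of `H`
are stable. -/
theorem stmt_13 (p r m : ℕ) (hp : 0 < p) (hr : 0 < r) (hm : 0 < m)
    (A11 : Matrix (Fin p) (Fin p) ℝ) (A12 : Matrix (Fin p) (Fin r) ℝ)
    (A21 : Matrix (Fin r) (Fin p) ℝ) (A22 : Matrix (Fin r) (Fin r) ℝ)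
    (B1 : Matrix (Fin p) (Fin m) ℝ) (B2 : Matrix (Fin r) (Fin m) ℝ)
    (hobs : ObsPair A12 A22)
    (hctrb : CtrbPair (fromBlocks A11 A12 A21 A22) (fromRows B1 B2))
    (K : Matrix (Fin r) (Fin p) ℝ) (hK : IsHurwitz (A22 + K * A12))
    (Gp : Matrix (Fin m) (Fin p) FF)
    (hL : IsUnit (fromBlocks (1 : Matrix (Fin p) (Fin p) FF)
      (-((lam • (1 : Matrix (Fin p) (Fin p) FF) - srtrW A11 A12 A21 A22 K)⁻¹ *
        srtrV A12 A22 B1 B2 K)) (-Gp) (1 : Matrix (Fin m) (Fin m) FF)))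
    (hLstab : ∀ i j, StableF ((fromBlocks (1 : Matrix (Fin p) (Fin p) FF)
      (-((lam • (1 : Matrix (Fin p) (Fin p) FF) - srtrW A11 A12 A21 A22 K)⁻¹ *
        srtrV A12 A22 B1 B2 K)) (-Gp) (1 : Matrix (Fin m) (Fin m) FF))⁻¹ i j)) :
    let W := srtrW A11 A12 A21 A22 K
    let V := srtrV A12 A22 B1 B2 K
    let T : Matrix (Fin p) (Fin p) FF :=
      (1 : Matrix (Fin p) (Fin p) FF) - lam⁻¹ • W - lam⁻¹ • (V * Gp)
    IsUnit T ∧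
    (∀ i j, StableF ((fromRows (fromRows (1 : Matrix (Fin p) (Fin p) FF)
        (1 : Matrix (Fin p) (Fin p) FF)) Gp * T⁻¹ *
      fromCols (fromCols (1 : Matrix (Fin p) (Fin p) FF) (lam⁻¹ • W))
        (lam⁻¹ • V)) i j)) :=
  stmt_13_general p r m A11 A12 A21 A22 B1 B2 hctrb K Gp hL hLstab
end
end

section
/- Assume (A12, A22) is observable, (A, B) is controllable, and K ∈ ℝ^{(n−p)×p} is such that A22 + K·A12 is Hurwitz. Fix i ∈ {1,…,p} and define A_{di} := [[0, e_i^T·A12],[0, A22 + K·A12]] ∈ ℝ^{(n−p+1)×(n−p+1)}, B_{di} := [[e_i^T·(A11 − A12·K), e_i^T·B1],[A_K, K·B1 + B2]] ∈ ℝ^{(n−p+1)×(p+m)}, and C_{di} := [1, 0, …, 0] ∈ ℝ^{1×(n−p+1)}. Then for every μ ∈ ℂ with Re μ ≥ 0, the complexified stacked matrix [A_{di} − μI_{n−p+1}; C_{di}] has full column rank n−p+1 and the complexified matrix [A_{di} − μI_{n−p+1}, B_{di}] has full row rank n−p+1; that is, this realization of the i-th row of K_d(λ) = [λ^{-1}·W,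 λ^{-1}·V] is detectable and stabilizable. -/
open Matrix Polynomial

set_option synthInstance.maxHeartbeats 1000000
set_option maxHeartbeats 1000000

noncomputable section

/-!
Detectability: the output `[1, 0]` kills the first state coordinate, and what remains is
`A22 + K A12 - μ`, which is invertible for `Re μ ≥ 0` because `A22 + K A12` is Hurwitz.

Stabilizability: the state map `T x = (e_iᵀ x₁, x₂ + K x₁)` satisfies
`T A = A_di T + B_di [I 0; 0 0]` and `T B = B_di [0; I]`, and has a right inverse. Hence a
left null vector `w` of `[A_di - μ, B_di]` gives the left null vector `w T` of `[A - μ, B]`,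
which vanishes by controllability, and then `w = 0`.
-/

section
variable {𝕜 : Type*} [Field 𝕜] {m n : Type*} [Fintype m] [Fintype n]

theorem Matrix.rank_eq_card_height_iff {M : Matrix m n 𝕜} :
    M.rank = Fintype.card m ↔ Function.Injective M.vecMul := by
  rw [vecMul_injective_iff, linearIndependent_iff_card_eq_finrank_span, rank_eq_finrank_span_row,
    Set.finrank, eq_comm]

theorem Matrix.rank_eq_card_width_iff {M : Matrix m n 𝕜} :
    M.rank = Fintype.card n ↔ Function.Injective M.mulVec := by
  rw [← rank_transpose, rank_eq_card_height_iff]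
  exact Iff.of_eq (congrArg _ (funext fun v => vecMul_transpose M v))

theorem Matrix.rank_eq_card_height_of_mul_eq {m' n' : Type*} [Fintype m'] [Fintype n']
    [DecidableEq m'] {M : Matrix m n 𝕜} {M' : Matrix m' n' 𝕜} (T : Matrix m' m 𝕜)
    (S : Matrix m m' 𝕜) (N : Matrix n' n 𝕜) (hTS : T * S = 1) (h : T * M = M' * N)
    (hM : M.rank = Fintype.card m) : M'.rank = Fintype.card m' := by
  rw [rank_eq_card_height_iff] at hM ⊢
  have hT : Function.Injective T.vecMul := fun x y hxy => by
    simpa only [vecMul_vecMul, hTS, vecMul_one] using congrArg (· ᵥ* S) hxy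
  intro x y (hxy : x ᵥ* M' = y ᵥ* M')
  refine hT (hM ?_)
  simpa only [vecMul_vecMul, h] using congrArg (· ᵥ* N) hxy

theorem Matrix.rank_fromCols_sub_smul_eq_card_of_intertwine {n' k k' : Type*} [Fintype n']
    [Fintype k] [Fintype k'] [DecidableEq n] [DecidableEq n']
    {A : Matrix n n 𝕜} {B : Matrix n k 𝕜} {A' : Matrix n' n' 𝕜} {B' : Matrix n' k' 𝕜}
    (T : Matrix n' n 𝕜) (S : Matrix n n' 𝕜) (P : Matrix k' n 𝕜) (Q : Matrix k' k 𝕜)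
    (hTS : T * S = 1) (hA : T * A = A' * T + B' * P) (hB : T * B = B' * Q) (μ : 𝕜)
    (h : (fromCols (A - μ • 1) B).rank = Fintype.card n) :
    (fromCols (A' - μ • 1) B').rank = Fintype.card n' := by
  refine rank_eq_card_height_of_mul_eq T S (fromBlocks T 0 P Q) hTS ?_ h
  rw [mul_fromCols, fromCols_mul_fromBlocks, Matrix.mul_sub, hA, hB, Matrix.sub_mul,
    Matrix.mul_smul, Matrix.smul_mul, Matrix.mul_one, Matrix.one_mul, Matrix.mul_zero, zero_add]
  abel_nf

theorem Matrix.rank_fromRows_fromBlocks_sub_smul_eq_card {l : Type*} [Fintype l] [DecidableEq l]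
    [DecidableEq n] (X : Matrix l l 𝕜) (a : Matrix l n 𝕜) (Y : Matrix n l 𝕜) (F : Matrix n n 𝕜)
    (μ : 𝕜) (hF : IsUnit (F - μ • 1)) :
    (fromRows (fromBlocks X a Y F - μ • 1) (fromCols (1 : Matrix l l 𝕜) 0)).rank =
      Fintype.card (l ⊕ n) := by
  rw [rank_eq_card_width_iff, ← coe_mulVecLin, injective_iff_map_eq_zero]
  intro v hv
  obtain ⟨x, y, rfl⟩ : ∃ x y, v = Sum.elim x y := ⟨_, _, (Sum.elim_comp_inl_inr v).symm⟩
  rw [mulVecLin_apply, fromRows_mulVec, fromCols_mulVec_sumElim, sub_mulVec, smul_mulVec,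
    one_mulVec, one_mulVec, zero_mulVec, add_zero, fromBlocks_mulVec, Sum.elim_comp_inl,
    Sum.elim_comp_inr] at hv
  have hx : x = 0 := funext fun j => congrFun hv (Sum.inr j)
  have hy : (F - μ • 1) *ᵥ y = 0 := by
    funext j
    simpa [hx, sub_mulVec, smul_mulVec] using congrFun hv (Sum.inl (Sum.inr j))
  rw [hx, (mulVec_injective_iff_isUnit.mpr hF).eq_iff' (mulVec_zero _) |>.mp hy,
    Sum.elim_zero_zero]
end

theorem IsHurwitz.isUnit_mapC_sub_smul {k : Type} [Fintype k] [DecidableEq k]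
    {F : Matrix k k ℝ} (hF : IsHurwitz F) {μ : ℂ} (hμ : 0 ≤ μ.re) : IsUnit (mapC F - μ • 1) := by
  rw [isUnit_iff_isUnit_det, isUnit_iff_ne_zero]
  intro hdet
  unfold mapC at hdet
  refine (hF μ ?_).not_ge hμ
  rw [IsRoot, ← charpoly_map, eval_charpoly, scalar_apply, ← smul_one_eq_diagonal, ← neg_sub,
    det_neg, hdet, mul_zero]

theorem mapC_mul {k l o : Type} [Fintype l] (M : Matrix k l ℝ) (N : Matrix l o ℝ) :
    mapC (M * N) = mapC M * mapC N :=
  Matrix.map_mul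

theorem mapC_add {k l : Type} (M N : Matrix k l ℝ) : mapC (M + N) = mapC M + mapC N :=
  Matrix.map_add _ (map_add _) M N

theorem mapC_one {k : Type} [DecidableEq k] : mapC (1 : Matrix k k ℝ) = 1 :=
  Matrix.map_one _ (map_zero _) (map_one _)

section Realization
variable {R : Type*} [CommRing R] {l p r m : Type*} (E : Matrix l p R) (K : Matrix r p R)

theorem fromBlocks_mul_fromBlocks_eq_one_of_mul_eq_one [Fintype p] [Fintype r] [DecidableEq l]
    [DecidableEq r] (e : Matrix p l R) (he : E * e = 1) :
    fromBlocks E 0 K (1 : Matrix r r R) * fromBlocks e 0 (-(K * e)) (1 : Matrix r r R) = 1 := by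
  rw [fromBlocks_multiply, ← fromBlocks_one]
  simp [he]

theorem fromBlocks_mul_fromBlocks_intertwine [Fintype l] [Fintype p] [Fintype r]
    [Fintype m] [DecidableEq p] [DecidableEq r] (A11 : Matrix p p R) (A12 : Matrix p r R)
    (A21 : Matrix r p R) (A22 : Matrix r r R) (B1 : Matrix p m R) (B2 : Matrix r m R) :
    fromBlocks E 0 K (1 : Matrix r r R) * fromBlocks A11 A12 A21 A22 =
      fromBlocks (0 : Matrix l l R) (E * A12) 0 (A22 + K * A12) * fromBlocks E 0 K 1 +
        fromBlocks (E * (A11 - A12 * K)) (E * B1) (K * A11 - K * A12 * K + A21 - A22 * K)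
          (K * B1 + B2) * fromBlocks (1 : Matrix p p R) 0 0 (0 : Matrix m r R) := by
  rw [fromBlocks_multiply, fromBlocks_multiply, fromBlocks_multiply, fromBlocks_add]
  congr 1 <;> simp only [Matrix.zero_mul, Matrix.mul_zero, Matrix.one_mul, Matrix.mul_one,
    Matrix.mul_sub, Matrix.add_mul, Matrix.mul_assoc, add_zero, zero_add] <;> abel

theorem fromBlocks_mul_fromRows_intertwine [Fintype p] [Fintype r] [Fintype m]
    [DecidableEq r] [DecidableEq m] (A11 : Matrix p p R) (A12 : Matrix p r R)
    (A21 : Matrix r p R) (A22 : Matrix r r R) (B1 : Matrix p m R) (B2 : Matrix r m R) :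
    fromBlocks E 0 K (1 : Matrix r r R) * fromRows B1 B2 =
      fromBlocks (E * (A11 - A12 * K)) (E * B1) (K * A11 - K * A12 * K + A21 - A22 * K)
          (K * B1 + B2) * fromRows (0 : Matrix p m R) (1 : Matrix m m R) := by
  rw [fromBlocks_mul_fromRows, fromBlocks_mul_fromRows]
  simp only [Matrix.zero_mul, Matrix.mul_zero, Matrix.one_mul, Matrix.mul_one, add_zero, zero_add]

end Realization

theorem rank_fromCols_realization_eq_card {l p r m : Type} [Fintype l] [Fintype p] [Fintype r]
    [Fintype m] [DecidableEq l] [DecidableEq p] [DecidableEq r] [DecidableEq m]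
    (E : Matrix l p ℝ) (e : Matrix p l ℝ) (he : E * e = 1) (K : Matrix r p ℝ)
    (A11 : Matrix p p ℝ) (A12 : Matrix p r ℝ) (A21 : Matrix r p ℝ) (A22 : Matrix r r ℝ)
    (B1 : Matrix p m ℝ) (B2 : Matrix r m ℝ) (μ : ℂ)
    (h : (fromCols (mapC (fromBlocks A11 A12 A21 A22) - μ • 1) (mapC (fromRows B1 B2))).rank =
      Fintype.card (p ⊕ r)) :
    (fromCols (mapC (fromBlocks (0 : Matrix l l ℝ) (E * A12) 0 (A22 + K * A12)) - μ • 1)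
      (mapC (fromBlocks (E * (A11 - A12 * K)) (E * B1) (K * A11 - K * A12 * K + A21 - A22 * K)
        (K * B1 + B2)))).rank = Fintype.card (l ⊕ r) := by
  have hTS := congrArg mapC (fromBlocks_mul_fromBlocks_eq_one_of_mul_eq_one E K e he)
  have hTA := congrArg mapC (fromBlocks_mul_fromBlocks_intertwine E K A11 A12 A21 A22 B1 B2)
  have hTB := congrArg mapC (fromBlocks_mul_fromRows_intertwine E K A11 A12 A21 A22 B1 B2)
  simp only [mapC_mul, mapC_add, mapC_one] at hTS hTA hTB
  exact rank_fromCols_sub_smul_eq_card_of_intertwine _ _ _ _ hTS hTA hTB μ h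

theorem stmt_19_general (p r m : ℕ)
    (A11 : Matrix (Fin p) (Fin p) ℝ) (A12 : Matrix (Fin p) (Fin r) ℝ)
    (A21 : Matrix (Fin r) (Fin p) ℝ) (A22 : Matrix (Fin r) (Fin r) ℝ)
    (B1 : Matrix (Fin p) (Fin m) ℝ) (B2 : Matrix (Fin r) (Fin m) ℝ)
    (hctrb : CtrbPair (fromBlocks A11 A12 A21 A22) (fromRows B1 B2))
    (K : Matrix (Fin r) (Fin p) ℝ) (hK : IsHurwitz (A22 + K * A12)) (i : Fin p) :
    let Adi : Matrix (Fin 1 ⊕ Fin r) (Fin 1 ⊕ Fin r) ℝ :=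
      fromBlocks (0 : Matrix (Fin 1) (Fin 1) ℝ) (Matrix.of fun _ j => A12 i j)
        (0 : Matrix (Fin r) (Fin 1) ℝ) (A22 + K * A12)
    let Bdi : Matrix (Fin 1 ⊕ Fin r) (Fin p ⊕ Fin m) ℝ :=
      fromBlocks (Matrix.of fun _ j => (A11 - A12 * K) i j)
        (Matrix.of fun _ k => B1 i k) (AKmat A11 A12 A21 A22 K) (K * B1 + B2)
    let Cdi : Matrix (Fin 1) (Fin 1 ⊕ Fin r) ℝ :=
      fromCols (1 : Matrix (Fin 1) (Fin 1) ℝ) (0 : Matrix (Fin 1) (Fin r) ℝ)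
    ∀ μ : ℂ, 0 ≤ μ.re →
      (fromRows (mapC Adi - μ • (1 : Matrix (Fin 1 ⊕ Fin r) (Fin 1 ⊕ Fin r) ℂ))
        (mapC Cdi)).rank = 1 + r ∧
      (fromCols (mapC Adi - μ • (1 : Matrix (Fin 1 ⊕ Fin r) (Fin 1 ⊕ Fin r) ℂ))
        (mapC Bdi)).rank = 1 + r := by
  intro Adi Bdi Cdi μ hμ
  have hcard : Fintype.card (Fin 1 ⊕ Fin r) = 1 + r := by simp
  rw [← hcard]
  constructor
  · have hC : mapC Cdi = fromCols 1 0 := by simp [Cdi, mapC, fromCols_map]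
    have hA : mapC Adi = fromBlocks 0 (mapC (Matrix.of fun _ j => A12 i j)) 0
        (mapC (A22 + K * A12)) := by simp [Adi, mapC, fromBlocks_map]
    rw [hA, hC]
    exact rank_fromRows_fromBlocks_sub_smul_eq_card _ _ _ _ μ (hK.isUnit_mapC_sub_smul hμ)
  · set E : Matrix (Fin 1) (Fin p) ℝ := replicateRow (Fin 1) (Pi.single i 1)
    set e : Matrix (Fin p) (Fin 1) ℝ := replicateCol (Fin 1) (Pi.single i 1)
    have he : E * e = 1 := by
      ext a b
      rw [Subsingleton.elim a b]
      simp [E, e]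
    have hrow {c : Type} [Fintype c] (M : Matrix (Fin p) c ℝ) :
        (Matrix.of fun (_ : Fin 1) j => M i j) = E * M := by
      rw [← replicateRow_vecMul, single_one_vecMul]; rfl
    have hAdi : Adi = fromBlocks 0 (E * A12) 0 (A22 + K * A12) := by
      simp only [Adi, hrow]
    have hBdi : Bdi = fromBlocks (E * (A11 - A12 * K)) (E * B1)
        (K * A11 - K * A12 * K + A21 - A22 * K) (K * B1 + B2) := by
      simp only [Bdi, hrow, AKmat]
    rw [hAdi, hBdi]
    exact rank_fromCols_realization_eq_card E e he K A11 A12 A21 A22 B1 B2 μ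
      ((hctrb μ).trans (by simp))

/-- under observability, controllability, and `A22 + K A12` Hurwitz, the
displayed order-`(n-p+1)` realization of the `i`-th row of `K_d(λ) = [λ⁻¹ W, λ⁻¹ V]` is
detectable and stabilizable. -/
theorem stmt_19 (p r m : ℕ) (hp : 0 < p) (hr : 0 < r) (hm : 0 < m)
    (A11 : Matrix (Fin p) (Fin p) ℝ) (A12 : Matrix (Fin p) (Fin r) ℝ)
    (A21 : Matrix (Fin r) (Fin p) ℝ) (A22 : Matrix (Fin r) (Fin r) ℝ)
    (B1 : Matrix (Fin p) (Fin m) ℝ) (B2 : Matrix (Fin r) (Fin m) ℝ)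
    (hobs : ObsPair A12 A22)
    (hctrb : CtrbPair (fromBlocks A11 A12 A21 A22) (fromRows B1 B2))
    (K : Matrix (Fin r) (Fin p) ℝ) (hK : IsHurwitz (A22 + K * A12)) (i : Fin p) :
    let Adi : Matrix (Fin 1 ⊕ Fin r) (Fin 1 ⊕ Fin r) ℝ :=
      fromBlocks (0 : Matrix (Fin 1) (Fin 1) ℝ) (Matrix.of fun _ j => A12 i j)
        (0 : Matrix (Fin r) (Fin 1) ℝ) (A22 + K * A12)
    let Bdi : Matrix (Fin 1 ⊕ Fin r) (Fin p ⊕ Fin m) ℝ :=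
      fromBlocks (Matrix.of fun _ j => (A11 - A12 * K) i j)
        (Matrix.of fun _ k => B1 i k) (AKmat A11 A12 A21 A22 K) (K * B1 + B2)
    let Cdi : Matrix (Fin 1) (Fin 1 ⊕ Fin r) ℝ :=
      fromCols (1 : Matrix (Fin 1) (Fin 1) ℝ) (0 : Matrix (Fin 1) (Fin r) ℝ)
    ∀ μ : ℂ, 0 ≤ μ.re →
      (fromRows (mapC Adi - μ • (1 : Matrix (Fin 1 ⊕ Fin r) (Fin 1 ⊕ Fin r) ℂ))
        (mapC Cdi)).rank = 1 + r ∧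
      (fromCols (mapC Adi - μ • (1 : Matrix (Fin 1 ⊕ Fin r) (Fin 1 ⊕ Fin r) ℂ))
        (mapC Bdi)).rank = 1 + r :=
  stmt_19_general p r m A11 A12 A21 A22 B1 B2 hctrb K hK i
end
end
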